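/- arXiv:1607.01142 — 6 statements merged into one kernel-verified Lean document; each statement's English description precedes it below -/
import Mathlib

section
/- Let w ∈ ℂ with w ≠ 0 and w² ≠ -1, and set z := i·w where i is the imaginary unit. Then for every N ∈ ℕ, the quantum factorial and the super quantum factorial are related by [N]_z! = i^{N(N-1)/2} · {N}_w!. -/
open Complex

/-- The quantum integer `[k]_z = (z^k - z^{-k})/(z - z⁻¹)`. -/
noncomputable def qint (z : ℂ) (k : ℕ) : ℂ := (z ^ k - z⁻¹ ^ k) / (z - z⁻¹)

/-- The quantum factorial `[N]_z! = ∏_{k=1}^N [k]_z`. -/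
noncomputable def qfact (z : ℂ) (N : ℕ) : ℂ := ∏ k ∈ Finset.Icc 1 N, qint z k

/-- The super quantum integer `{k}_w = (w^k - (-w)^{-k})/(w + w⁻¹)`. -/
noncomputable def sqint (w : ℂ) (k : ℕ) : ℂ := (w ^ k - (-w)⁻¹ ^ k) / (w + w⁻¹)

/-- The super quantum factorial `{N}_w! = ∏_{k=1}^N {k}_w`. -/
noncomputable def sfact (w : ℂ) (N : ℕ) : ℂ := ∏ k ∈ Finset.Icc 1 N, sqint w k


lemma hden_aux (w : ℂ) (hw : w ≠ 0) (hw2 : w ^ 2 ≠ -1) : w + w⁻¹ ≠ 0 := by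
  intro h
  apply hw2
  have := congrArg (· * w) h
  field_simp at this
  linear_combination this

lemma qint_I_aux (w : ℂ) (hw : w ≠ 0) (hw2 : w ^ 2 ≠ -1) (m : ℕ) :
    qint (Complex.I * w) (m + 1) = Complex.I ^ m * sqint w (m + 1) := by
  have hd := hden_aux w hw hw2
  have hI : (Complex.I : ℂ) ≠ 0 := Complex.I_ne_zero
  unfold qint sqint
  have h1 : ((Complex.I * w)⁻¹ : ℂ) = -(Complex.I * w⁻¹) := by
    rw [mul_inv, Complex.inv_I]; ring
  have h2 : ((-w)⁻¹ : ℂ) = -w⁻¹ := by rw [inv_neg]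
  rw [h1, h2]
  have hdz : Complex.I * w - -(Complex.I * w⁻¹) = Complex.I * (w + w⁻¹) := by ring
  rw [hdz]
  have h3 : (-(Complex.I * w⁻¹)) ^ (m+1) = (-1:ℂ)^(m+1) * Complex.I^(m+1) * (w⁻¹)^(m+1) := by
    ring
  have h4 : (-w⁻¹ : ℂ) ^ (m+1) = (-1:ℂ)^(m+1) * (w⁻¹)^(m+1) := by ring
  rw [h3, h4, mul_pow]
  rw [← mul_div_assoc, div_eq_div_iff (mul_ne_zero hI hd) hd, pow_succ]
  ring

/-- For `w ≠ 0` with `w² ≠ -1` and `z = i·w`, one has `[N]_z! = i^{N(N-1)/2} {N}_w!`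
for all `N ∈ ℕ`. -/
theorem qfact_I_mul (w : ℂ) (hw : w ≠ 0) (hw2 : w ^ 2 ≠ -1) (N : ℕ) :
    qfact (Complex.I * w) N = Complex.I ^ (N * (N - 1) / 2) * sfact w N := by
  induction N with
  | zero => simp [qfact, sfact]
  | succ n ih =>
    have h1 : (1:ℕ) ≤ n + 1 := by omega
    unfold qfact sfact at *
    rw [Finset.prod_Icc_succ_top h1, Finset.prod_Icc_succ_top h1, ih,
      qint_I_aux w hw hw2 n]
    have he : (n + 1) * (n + 1 - 1) / 2 = n * (n - 1) / 2 + n := by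
      rcases n with _ | m
      · simp
      · simp only [Nat.add_sub_cancel]
        have : (m + 1 + 1) * (m + 1) = (m + 1) * m + 2 * (m + 1) := by ring
        omega
    rw [he, pow_add]
    ring
end

section
/- Let w, z ∈ ℂ with w ≠ 0, w² ≠ 1, w² ≠ -1, w⁴ - w² + 1 ≠ 0, and z² = -w². Then for every 0 ≤ k ≤ 3, the quantum binomial coefficient and the super binomial coefficient satisfy [3 choose k]_z = (-1)^{k(k+1)/2} · {3 choose k}_w. -/
/-- The quantum binomial coefficient `[N choose k]_z = [N]_z!/([N-k]_z! [k]_z!)`. -/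
noncomputable def qbinom (z : ℂ) (N k : ℕ) : ℂ := qfact z N / (qfact z (N - k) * qfact z k)

/-- The super quantum binomial coefficient `{N choose k}_w = {N}_w!/({N-k}_w! {k}_w!)`. -/
noncomputable def sbinom (w : ℂ) (N k : ℕ) : ℂ := sfact w N / (sfact w (N - k) * sfact w k)

/-- For `w ≠ 0` with `w² ≠ ±1`, `w⁴ - w² + 1 ≠ 0`, and `z² = -w²`, one has
`[3 choose k]_z = (-1)^{k(k+1)/2} {3 choose k}_w` for all `0 ≤ k ≤ 3`. -/
theorem qbinom_three (w z : ℂ) (hw : w ≠ 0) (hw1 : w ^ 2 ≠ 1) (hw2 : w ^ 2 ≠ -1)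
    (hw4 : w ^ 4 - w ^ 2 + 1 ≠ 0) (hz : z ^ 2 = -w ^ 2) (k : ℕ) (hk : k ≤ 3) :
    qbinom z 3 k = (-1 : ℂ) ^ (k * (k + 1) / 2) * sbinom w 3 k := by
  have hz0 : z ≠ 0 := by
    intro h
    rw [h] at hz
    exact hw (by
      have : w ^ 2 = 0 := by linear_combination hz
      exact pow_eq_zero_iff (n := 2) (by norm_num) |>.mp this)
  have hzi : z * z⁻¹ = 1 := mul_inv_cancel₀ hz0
  have hwi : w * w⁻¹ = 1 := mul_inv_cancel₀ hw
  have hzz : z - z⁻¹ ≠ 0 := by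
    intro h
    have h1 : z ^ 2 = 1 := by linear_combination z * h + hzi
    exact hw2 (by linear_combination hz - h1)
  have hww : w + w⁻¹ ≠ 0 := by
    intro h
    exact hw2 (by linear_combination w * h - hwi)
  -- values of the quantum integers
  have q1 : qint z 1 = 1 := by rw [qint, pow_one, pow_one, div_self hzz]
  have q2 : qint z 2 = z + z⁻¹ := by
    rw [qint, div_eq_iff hzz]; ring
  have q3 : qint z 3 = z ^ 2 + 1 + z⁻¹ ^ 2 := by
    rw [qint, div_eq_iff hzz]; linear_combination (z - z⁻¹) * hzi
  have s1 : sqint w 1 = 1 := by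
    rw [sqint, pow_one, pow_one, inv_neg, sub_neg_eq_add, div_self hww]
  have s2 : sqint w 2 = w - w⁻¹ := by
    rw [sqint, inv_neg, div_eq_iff hww]; ring
  have s3 : sqint w 3 = w ^ 2 - 1 + w⁻¹ ^ 2 := by
    rw [sqint, inv_neg, div_eq_iff hww]; linear_combination -(w + w⁻¹) * hwi
  -- nonvanishing of the values
  have hv2 : z + z⁻¹ ≠ 0 := by
    intro h
    exact hw1 (by linear_combination hz - z * h + hzi)
  have hv3 : z ^ 2 + 1 + z⁻¹ ^ 2 ≠ 0 := by
    intro h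
    exact hw4 (by
      linear_combination z ^ 2 * h + (w ^ 2 - z ^ 2 - 1) * hz - (z * z⁻¹ + 1) * hzi)
  have sv2 : w - w⁻¹ ≠ 0 := by
    intro h
    exact hw1 (by linear_combination w * h + hwi)
  have sv3 : w ^ 2 - 1 + w⁻¹ ^ 2 ≠ 0 := by
    intro h
    exact hw4 (by linear_combination w ^ 2 * h - (w * w⁻¹ + 1) * hwi)
  -- factorials
  have hf0 : qfact z 0 = 1 := by simp [qfact]
  have hf1 : qfact z 1 = 1 := by
    rw [qfact, show Finset.Icc 1 1 = ({1} : Finset ℕ) from rfl, Finset.prod_singleton, q1]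
  have hf2 : qfact z 2 = z + z⁻¹ := by
    rw [qfact, show Finset.Icc 1 2 = ({1, 2} : Finset ℕ) from rfl,
      Finset.prod_insert (by decide), Finset.prod_singleton, q1, q2, one_mul]
  have hf3 : qfact z 3 = (z + z⁻¹) * (z ^ 2 + 1 + z⁻¹ ^ 2) := by
    rw [qfact, show Finset.Icc 1 3 = ({1, 2, 3} : Finset ℕ) from rfl,
      Finset.prod_insert (by decide), Finset.prod_insert (by decide),
      Finset.prod_singleton, q1, q2, q3, one_mul]
  have sf0 : sfact w 0 = 1 := by simp [sfact]
  have sf1 : sfact w 1 = 1 := by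
    rw [sfact, show Finset.Icc 1 1 = ({1} : Finset ℕ) from rfl, Finset.prod_singleton, s1]
  have sf2 : sfact w 2 = w - w⁻¹ := by
    rw [sfact, show Finset.Icc 1 2 = ({1, 2} : Finset ℕ) from rfl,
      Finset.prod_insert (by decide), Finset.prod_singleton, s1, s2, one_mul]
  have sf3 : sfact w 3 = (w - w⁻¹) * (w ^ 2 - 1 + w⁻¹ ^ 2) := by
    rw [sfact, show Finset.Icc 1 3 = ({1, 2, 3} : Finset ℕ) from rfl,
      Finset.prod_insert (by decide), Finset.prod_insert (by decide),
      Finset.prod_singleton, s1, s2, s3, one_mul]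
  have hf3ne : qfact z 3 ≠ 0 := by rw [hf3]; exact mul_ne_zero hv2 hv3
  have sf3ne : sfact w 3 ≠ 0 := by rw [sf3]; exact mul_ne_zero sv2 sv3
  have key : z ^ 2 + 1 + z⁻¹ ^ 2 = -(w ^ 2 - 1 + w⁻¹ ^ 2) := by
    linear_combination (1 + z⁻¹ ^ 2 * w⁻¹ ^ 2) * hz - w⁻¹ ^ 2 * (z * z⁻¹ + 1) * hzi -
      z⁻¹ ^ 2 * (w * w⁻¹ + 1) * hwi
  interval_cases k
  · rw [qbinom, sbinom]
    norm_num [hf0, sf0, div_self hf3ne, div_self sf3ne]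
  · rw [qbinom, sbinom]
    norm_num [hf1, hf2, hf3, sf1, sf2, sf3]
    rw [mul_div_cancel_left₀ _ hv2, mul_div_cancel_left₀ _ sv2]
    simpa [← inv_pow] using key
  · rw [qbinom, sbinom]
    norm_num [hf1, hf2, hf3, sf1, sf2, sf3]
    rw [mul_div_cancel_left₀ _ hv2, mul_div_cancel_left₀ _ sv2]
    simpa [← inv_pow] using key
  · rw [qbinom, sbinom]
    norm_num [hf0, sf0, div_self hf3ne, div_self sf3ne]
end

section
/- Let G be a commutative group and let σ, σ' ∈ G satisfy σ² = 1 and σ'² = 1. In the group Hopf algebra A = ℂ[G], the element x := (1 + σ) ⊗ 1 + (1 - σ) ⊗ σ' of A ⊗ A satisfies the Drinfeld-twist cocycle identity (Δ ⊗ id)(x) · (x ⊗ 1) = (id ⊗ Δ)(x) · (1 ⊗ x) in A ⊗ A ⊗ A. -/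
/-!
Write `a = 1 + σ` and `b = 1 - σ`, so that `x = a ⊗ 1 + b ⊗ σ'`. Since `σ a = a` and `σ b = -b`,
expanding `(Δ ⊗ id)(x) · (x ⊗ 1)` gives `a ⊗ a ⊗ 1 + a ⊗ b ⊗ σ' + b ⊗ aσ' ⊗ σ' + b ⊗ bσ' ⊗ 1`,
and since `σ'² = 1` so does `(id ⊗ Δ)(x) · (1 ⊗ x)`.
-/

open scoped TensorProduct

noncomputable section

variable (G : Type*) [CommGroup G]

/-- The comultiplication of the group Hopf algebra `ℂ[G]`, determined by `Δ(g) = g ⊗ g`. -/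
def Delta : MonoidAlgebra ℂ G →ₐ[ℂ] MonoidAlgebra ℂ G ⊗[ℂ] MonoidAlgebra ℂ G :=
  MonoidAlgebra.lift ℂ _ G
    { toFun := fun g => MonoidAlgebra.of ℂ G g ⊗ₜ[ℂ] MonoidAlgebra.of ℂ G g
      map_one' := by simp [Algebra.TensorProduct.one_def, MonoidAlgebra.one_def]
      map_mul' := fun g h => by
        simp [Algebra.TensorProduct.tmul_mul_tmul, map_mul] }

/-- The element `x_{σ,σ'} = (1+σ) ⊗ 1 + (1−σ) ⊗ σ'` of `ℂ[G] ⊗ ℂ[G]`. -/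
def xEl (σ σ' : G) : MonoidAlgebra ℂ G ⊗[ℂ] MonoidAlgebra ℂ G :=
  (1 + MonoidAlgebra.of ℂ G σ) ⊗ₜ[ℂ] 1 +
    (1 - MonoidAlgebra.of ℂ G σ) ⊗ₜ[ℂ] MonoidAlgebra.of ℂ G σ'

open Algebra.TensorProduct

section Twist

variable {R A : Type*} [CommRing R] [Ring A] [Algebra R A] {Δ : A →ₐ[R] A ⊗[R] A} {s t : A}

theorem twist_cocycle_lhs_eq (hs : s * s = 1) (hΔs : Δ s = s ⊗ₜ s) :
    Algebra.TensorProduct.assoc R R R A A A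
        (map Δ (AlgHom.id R A) ((1 + s) ⊗ₜ 1 + (1 - s) ⊗ₜ t) *
          (((1 + s) ⊗ₜ[R] (1 : A) + (1 - s) ⊗ₜ t) ⊗ₜ[R] (1 : A))) =
      (1 + s) ⊗ₜ ((1 + s) ⊗ₜ 1) + (1 + s) ⊗ₜ ((1 - s) ⊗ₜ t) +
        (1 - s) ⊗ₜ (((1 + s) * t) ⊗ₜ t) + (1 - s) ⊗ₜ (((1 - s) * t) ⊗ₜ 1) := by
  simp only [map_add, map_sub, map_one, map_tmul, hΔs, AlgHom.coe_id, id_eq, one_def,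
    TensorProduct.add_tmul, TensorProduct.sub_tmul, TensorProduct.tmul_add,
    TensorProduct.tmul_sub, add_mul, mul_add, sub_mul, mul_sub, tmul_mul_tmul, assoc_tmul,
    one_mul, mul_one, hs]
  abel

theorem twist_cocycle_rhs_eq (ht : t * t = 1) (hΔt : Δ t = t ⊗ₜ t) (hst : Commute s t) :
    map (AlgHom.id R A) Δ ((1 + s) ⊗ₜ 1 + (1 - s) ⊗ₜ t) *
          ((1 : A) ⊗ₜ[R] ((1 + s) ⊗ₜ[R] (1 : A) + (1 - s) ⊗ₜ t)) =
      (1 + s) ⊗ₜ ((1 + s) ⊗ₜ 1) + (1 + s) ⊗ₜ ((1 - s) ⊗ₜ t) +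
        (1 - s) ⊗ₜ (((1 + s) * t) ⊗ₜ t) + (1 - s) ⊗ₜ (((1 - s) * t) ⊗ₜ 1) := by
  have hat : t * (1 + s) = (1 + s) * t := ((Commute.one_left t).add_left hst).eq.symm
  have hbt : t * (1 - s) = (1 - s) * t := ((Commute.one_left t).sub_left hst).eq.symm
  simp only [map_add, map_sub, map_one, map_tmul, hΔt, AlgHom.coe_id, id_eq, one_def,
    add_mul, mul_add, tmul_mul_tmul, one_mul, mul_one, ht, hat, hbt]
  simp only [TensorProduct.tmul_add, TensorProduct.add_tmul]
  abel

theorem twist_cocycle (hs : s * s = 1) (ht : t * t = 1) (hΔs : Δ s = s ⊗ₜ s)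
    (hΔt : Δ t = t ⊗ₜ t) (hst : Commute s t) :
    Algebra.TensorProduct.assoc R R R A A A
        (map Δ (AlgHom.id R A) ((1 + s) ⊗ₜ 1 + (1 - s) ⊗ₜ t) *
          (((1 + s) ⊗ₜ[R] (1 : A) + (1 - s) ⊗ₜ t) ⊗ₜ[R] (1 : A))) =
      map (AlgHom.id R A) Δ ((1 + s) ⊗ₜ 1 + (1 - s) ⊗ₜ t) *
          ((1 : A) ⊗ₜ[R] ((1 + s) ⊗ₜ[R] (1 : A) + (1 - s) ⊗ₜ t)) :=
  (twist_cocycle_lhs_eq hs hΔs).trans (twist_cocycle_rhs_eq ht hΔt hst).symm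

end Twist

theorem Delta_of (g : G) :
    Delta G (MonoidAlgebra.of ℂ G g) = MonoidAlgebra.of ℂ G g ⊗ₜ MonoidAlgebra.of ℂ G g := by
  simp [Delta]

theorem MonoidAlgebra.of_mul_self_eq_one {g : G} (hg : g ^ 2 = 1) :
    MonoidAlgebra.of ℂ G g * MonoidAlgebra.of ℂ G g = 1 := by
  rw [← map_mul, ← sq, hg, map_one]

/-- If `σ² = 1` and `σ'² = 1` then `x = (1+σ)⊗1 + (1−σ)⊗σ'` satisfies the Drinfeld-twist
cocycle identity `(Δ ⊗ id)(x)·(x ⊗ 1) = (id ⊗ Δ)(x)·(1 ⊗ x)`. -/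
theorem xEl_cocycle (σ σ' : G) (hσ : σ ^ 2 = 1) (hσ' : σ' ^ 2 = 1) :
    Algebra.TensorProduct.assoc ℂ ℂ ℂ (MonoidAlgebra ℂ G) (MonoidAlgebra ℂ G) (MonoidAlgebra ℂ G)
        ((Algebra.TensorProduct.map (Delta G) (AlgHom.id ℂ (MonoidAlgebra ℂ G))) (xEl G σ σ') *
          ((xEl G σ σ') ⊗ₜ[ℂ] (1 : MonoidAlgebra ℂ G))) =
      (Algebra.TensorProduct.map (AlgHom.id ℂ (MonoidAlgebra ℂ G)) (Delta G)) (xEl G σ σ') *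
        ((1 : MonoidAlgebra ℂ G) ⊗ₜ[ℂ] (xEl G σ σ')) :=
  twist_cocycle (MonoidAlgebra.of_mul_self_eq_one G hσ) (MonoidAlgebra.of_mul_self_eq_one G hσ')
    (Delta_of G σ) (Delta_of G σ') (Commute.all _ _)
end
end

section
/- Let r ≥ 1 and let d : {1,…,r} → {1,−1} be any sign function. On ℤ^r with standard basis e₁,…,e_r, define the symmetric bilinear form B(u,v) = Σ_{l=1}^{r} d_l u_l v_l, and set α_l := e_l − e_{l+1} for 1 ≤ l < r and α_r := e_r. For 1 ≤ i ≤ r define v_i := Σ_{1 ≤ l ≤ i, l odd} α_l if i is even, and v_i := Σ_{1 ≤ l ≤ i, l odd} α_l + Σ_{i < l ≤ r} α_l if i is odd. Then for all 1 ≤ i, j ≤ r, the integer B(v_i, α_j) is odd if i = j and even if i ≠ j. -/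
/-- The `l`-th standard basis vector of `ℤ^r` (indices `1,…,r`). -/
def eVec (l : ℕ) : ℕ → ℤ := fun k => if k = l then 1 else 0

/-- The simple roots of type `B_r`: `α_l = e_l − e_{l+1}` for `1 ≤ l < r` and `α_r = e_r`. -/
def alphaVec (r l : ℕ) : ℕ → ℤ :=
  if l < r then eVec l - eVec (l + 1) else eVec l

/-- The bilinear form `B(u,v) = Σ_{l=1}^r d_l u_l v_l`. -/
def bformd (r : ℕ) (d : ℕ → ℤ) (u v : ℕ → ℤ) : ℤ :=
  ∑ l ∈ Finset.Icc 1 r, d l * u l * v l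

/-- `v_i = Σ_{l ≤ i, l odd} α_l` if `i` is even, and
`v_i = Σ_{l ≤ i, l odd} α_l + Σ_{i < l ≤ r} α_l` if `i` is odd. -/
def vVec (r i : ℕ) : ℕ → ℤ :=
  (∑ l ∈ (Finset.Icc 1 i).filter (fun l => Odd l), alphaVec r l) +
    (if Odd i then ∑ l ∈ Finset.Icc (i + 1) r, alphaVec r l else 0)

lemma eVec_def (l k : ℕ) : eVec l k = if k = l then 1 else 0 := rfl

lemma alpha_apply (r l k : ℕ) (hkr : k ≤ r) :
    alphaVec r l k = eVec l k - eVec (l + 1) k := by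
  unfold alphaVec eVec
  split
  · rfl
  · rename_i h
    have : k ≠ l + 1 := by omega
    simp [this]

lemma sum_eVec (S : Finset ℕ) (k : ℕ) :
    (∑ l ∈ S, eVec l k) = if k ∈ S then (1:ℤ) else 0 := by
  unfold eVec
  rw [Finset.sum_ite_eq]

lemma sum_eVec_succ (S : Finset ℕ) (k : ℕ) (hk : 1 ≤ k) :
    (∑ l ∈ S, eVec (l + 1) k) = if k - 1 ∈ S then (1:ℤ) else 0 := by
  unfold eVec
  rw [Finset.sum_congr rfl (fun l _ =>
    show (if k = l+1 then (1:ℤ) else 0) = if k - 1 = l then 1 else 0 by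
      split_ifs <;> omega)]
  rw [Finset.sum_ite_eq]

lemma sum_alpha_apply (S : Finset ℕ) (r k : ℕ) (hk : 1 ≤ k) (hkr : k ≤ r) :
    (∑ l ∈ S, alphaVec r l) k =
      (if k ∈ S then (1:ℤ) else 0) - (if k - 1 ∈ S then 1 else 0) := by
  rw [Finset.sum_apply]
  rw [Finset.sum_congr rfl (fun l _ => alpha_apply r l k hkr)]
  rw [Finset.sum_sub_distrib, sum_eVec, sum_eVec_succ S k hk]

lemma vVec_apply (r i k : ℕ) (hk : 1 ≤ k) (hkr : k ≤ r) :
    vVec r i k =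
      ((if k ∈ (Finset.Icc 1 i).filter (fun l => Odd l) then (1:ℤ) else 0)
        - (if k - 1 ∈ (Finset.Icc 1 i).filter (fun l => Odd l) then 1 else 0))
      + (if Odd i then
          ((if k ∈ Finset.Icc (i+1) r then (1:ℤ) else 0)
            - (if k - 1 ∈ Finset.Icc (i+1) r then 1 else 0)) else 0) := by
  unfold vVec
  rw [Pi.add_apply, sum_alpha_apply _ r k hk hkr]
  congr 1
  rw [show ((if Odd i then ∑ l ∈ Finset.Icc (i + 1) r, alphaVec r l else 0) k)
      = (if Odd i then (∑ l ∈ Finset.Icc (i + 1) r, alphaVec r l) k else 0) from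
    apply_ite (fun f : ℕ → ℤ => f k) _ _ _]
  split
  · rw [sum_alpha_apply _ r k hk hkr]
  · rfl

lemma vVec_cast (r i k : ℕ) (hi1 : 1 ≤ i) (hir : i ≤ r) (hk : 1 ≤ k) (hkr : k ≤ r) :
    ((vVec r i k : ℤ) : ZMod 2) = if k ≤ i then 1 else 0 := by
  rw [vVec_apply r i k hk hkr]
  simp only [Finset.mem_filter, Finset.mem_Icc, Nat.odd_iff]
  push_cast [apply_ite (fun n : ℤ => (n : ZMod 2))]
  split_ifs <;> first | decide | omega

lemma odd_iff_cast (n : ℤ) : Odd n ↔ ((n : ZMod 2) = 1) := by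
  rw [Int.odd_iff, show (1 : ZMod 2) = ((1:ℤ) : ZMod 2) from rfl,
    ZMod.intCast_eq_intCast_iff, Int.ModEq]
  omega

/-- For any sign function `d` and `1 ≤ i, j ≤ r`, the integer `B(v_i, α_j)` is odd
if and only if `i = j`. -/
theorem bform_v_alpha_parity (r : ℕ) (hr : 1 ≤ r) (d : ℕ → ℤ)
    (hd : ∀ l, 1 ≤ l → l ≤ r → d l = 1 ∨ d l = -1)
    (i j : ℕ) (hi1 : 1 ≤ i) (hir : i ≤ r) (hj1 : 1 ≤ j) (hjr : j ≤ r) :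
    Odd (bformd r d (vVec r i) (alphaVec r j)) ↔ i = j := by
  rw [odd_iff_cast]
  unfold bformd
  push_cast
  have step : ∀ l ∈ Finset.Icc 1 r,
      ((d l : ZMod 2) * (vVec r i l : ZMod 2) * (alphaVec r j l : ZMod 2))
        = (if l = j then ((vVec r i l : ℤ) : ZMod 2) else 0)
          + (if l = j + 1 then ((vVec r i l : ℤ) : ZMod 2) else 0) := by
    intro l hl
    rw [Finset.mem_Icc] at hl
    have hd1 : (d l : ZMod 2) = 1 := by
      rcases hd l hl.1 hl.2 with h | h <;> rw [h] <;> decide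
    rw [hd1, one_mul, alpha_apply r j l hl.2, eVec_def, eVec_def]
    have hne : ¬(l = j ∧ l = j + 1) := by omega
    push_cast [apply_ite (fun n : ℤ => (n : ZMod 2))]
    split_ifs with h1 h2 <;> simp_all <;> ring_nf <;> simp [CharTwo.neg_eq]
  rw [Finset.sum_congr rfl step, Finset.sum_add_distrib,
    Finset.sum_ite_eq' _ j, Finset.sum_ite_eq' _ (j+1)]
  rw [if_pos (Finset.mem_Icc.mpr ⟨hj1, hjr⟩)]
  by_cases hjr' : j < r
  · rw [if_pos (Finset.mem_Icc.mpr ⟨by omega, by omega⟩)]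
    rw [vVec_cast r i j hi1 hir hj1 hjr,
      vVec_cast r i (j+1) hi1 hir (by omega) (by omega)]
    split_ifs <;>
      first
        | omega
        | exact iff_of_true (by decide) (by omega)
        | exact iff_of_false (by decide) (by omega)
  · rw [if_neg (fun h => hjr' (by have := Finset.mem_Icc.mp h; omega))]
    rw [vVec_cast r i j hi1 hir hj1 hjr]
    split_ifs <;>
      first
        | omega
        | exact iff_of_true (by decide) (by omega)
        | exact iff_of_false (by decide) (by omega)
end

section
/- Let H be a bialgebra over ℂ with comultiplication Δ and counit ε, and let u ∈ H satisfy u·u = 1, Δ(u) = u ⊗ u and ε(u) = 1. Define the linear map P : H ⊗ H → H ⊗ H by P(y) := (1/2)(y + (1⊗u)·y·(1⊗u)) + (1/2)(y − (1⊗u)·y·(1⊗u))·(u⊗1), and set Δ_u := P ∘ Δ : H → H ⊗ H. Then Δ_u is coassociative: (Δ_u ⊗ id) ∘ Δ_u = (id ⊗ Δ_u) ∘ Δ_u as linear maps H → H ⊗ H ⊗ H. -/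
open scoped TensorProduct

noncomputable section

variable (H : Type*) [Ring H] [Bialgebra ℂ H]

/-- Conjugation by `1 ⊗ u` on `H ⊗ H`, `y ↦ (1⊗u)·y·(1⊗u)`. -/
def conjT (u : H) : H ⊗[ℂ] H →ₗ[ℂ] H ⊗[ℂ] H :=
  (LinearMap.mulRight ℂ ((1 : H) ⊗ₜ[ℂ] u)).comp (LinearMap.mulLeft ℂ ((1 : H) ⊗ₜ[ℂ] u))

/-- The picture-change operator
`P(y) = ½(y + (1⊗u)y(1⊗u)) + ½(y − (1⊗u)y(1⊗u))·(u⊗1)`. -/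
def Pmap (u : H) : H ⊗[ℂ] H →ₗ[ℂ] H ⊗[ℂ] H :=
  (2 : ℂ)⁻¹ • ((LinearMap.id : H ⊗[ℂ] H →ₗ[ℂ] H ⊗[ℂ] H) + conjT H u) +
    (2 : ℂ)⁻¹ • ((LinearMap.mulRight ℂ (u ⊗ₜ[ℂ] (1 : H))).comp
      ((LinearMap.id : H ⊗[ℂ] H →ₗ[ℂ] H ⊗[ℂ] H) - conjT H u))

/-- The picture-changed comultiplication `Δ_u = P ∘ Δ`. -/
def Deltau (u : H) : H →ₗ[ℂ] H ⊗[ℂ] H :=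
  Pmap H u ∘ₗ (CoalgebraStruct.comul (R := ℂ) (A := H))

/-! ### Auxiliary definitions -/

/-- Conjugation by `u` on `H`: `a ↦ u * (a * u)`. -/
def sigU (u : H) : H →ₗ[ℂ] H :=
  (LinearMap.mulLeft ℂ u).comp (LinearMap.mulRight ℂ u)

/-- Projection onto the even part. -/
def pP (u : H) : H →ₗ[ℂ] H := (2 : ℂ)⁻¹ • (LinearMap.id + sigU H u)

/-- Projection onto the odd part. -/
def pM (u : H) : H →ₗ[ℂ] H := (2 : ℂ)⁻¹ • (LinearMap.id - sigU H u)

/-- Right multiplication by `u`. -/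
def ruU (u : H) : H →ₗ[ℂ] H := LinearMap.mulRight ℂ u

/-- The reorganized picture-change operator. -/
def Phi (u : H) : H ⊗[ℂ] H →ₗ[ℂ] H ⊗[ℂ] H :=
  TensorProduct.map LinearMap.id (pP H u) + TensorProduct.map (ruU H u) (pM H u)

lemma Pmap_eq_Phi (u : H) : Pmap H u = Phi H u := by
  apply TensorProduct.ext'
  intro a b
  simp only [Pmap, Phi, conjT, sigU, pP, pM, ruU, LinearMap.add_apply, LinearMap.smul_apply,
    LinearMap.comp_apply, LinearMap.id_apply, LinearMap.sub_apply, LinearMap.mulLeft_apply,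
    LinearMap.mulRight_apply, TensorProduct.map_tmul, Algebra.TensorProduct.tmul_mul_tmul,
    one_mul, mul_one]
  rw [sub_mul]
  simp only [Algebra.TensorProduct.tmul_mul_tmul, mul_one, mul_assoc,
    TensorProduct.tmul_add, TensorProduct.tmul_sub, TensorProduct.tmul_smul, smul_add, smul_sub]

lemma sigU_sigU (u : H) (hu : u * u = 1) : sigU H u ∘ₗ sigU H u = LinearMap.id := by
  ext a
  simp only [LinearMap.comp_apply, sigU, LinearMap.mulLeft_apply, LinearMap.mulRight_apply,
    LinearMap.id_apply]
  simp only [mul_assoc, hu, mul_one]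
  rw [← mul_assoc, hu, one_mul]

lemma sigU_ruU (u : H) : sigU H u ∘ₗ ruU H u = ruU H u ∘ₗ sigU H u := by
  ext a
  simp [sigU, ruU, mul_assoc]

lemma ruU_ruU (u : H) (hu : u * u = 1) : ruU H u ∘ₗ ruU H u = LinearMap.id := by
  ext a
  simp [ruU, mul_assoc, hu]

lemma pP_pP (u : H) (hu : u * u = 1) : pP H u ∘ₗ pP H u = pP H u := by
  simp only [pP, LinearMap.comp_smul, LinearMap.smul_comp, LinearMap.add_comp,
    LinearMap.comp_add, LinearMap.id_comp, LinearMap.comp_id, sigU_sigU H u hu]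
  module

lemma pM_pM (u : H) (hu : u * u = 1) : pM H u ∘ₗ pM H u = pM H u := by
  simp only [pM, LinearMap.comp_smul, LinearMap.smul_comp, LinearMap.sub_comp,
    LinearMap.comp_sub, LinearMap.id_comp, LinearMap.comp_id, sigU_sigU H u hu]
  module

lemma pP_pM (u : H) (hu : u * u = 1) : pP H u ∘ₗ pM H u = 0 := by
  simp only [pP, pM, LinearMap.comp_smul, LinearMap.smul_comp, LinearMap.add_comp,
    LinearMap.comp_add, LinearMap.sub_comp, LinearMap.comp_sub, LinearMap.id_comp,
    LinearMap.comp_id, sigU_sigU H u hu]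
  module

lemma pM_pP (u : H) (hu : u * u = 1) : pM H u ∘ₗ pP H u = 0 := by
  simp only [pP, pM, LinearMap.comp_smul, LinearMap.smul_comp, LinearMap.add_comp,
    LinearMap.comp_add, LinearMap.sub_comp, LinearMap.comp_sub, LinearMap.id_comp,
    LinearMap.comp_id, sigU_sigU H u hu]
  module

lemma pP_ruU (u : H) : pP H u ∘ₗ ruU H u = ruU H u ∘ₗ pP H u := by
  simp only [pP, LinearMap.comp_smul, LinearMap.smul_comp, LinearMap.add_comp,
    LinearMap.comp_add, LinearMap.id_comp, LinearMap.comp_id, sigU_ruU]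

lemma pM_ruU (u : H) : pM H u ∘ₗ ruU H u = ruU H u ∘ₗ pM H u := by
  simp only [pM, LinearMap.comp_smul, LinearMap.smul_comp, LinearMap.sub_comp,
    LinearMap.comp_sub, LinearMap.id_comp, LinearMap.comp_id, sigU_ruU]

/-- abbreviation for comul -/
def DD : H →ₗ[ℂ] H ⊗[ℂ] H := CoalgebraStruct.comul (R := ℂ) (A := H)

lemma mulRight_tmul (u v : H) :
    (LinearMap.mulRight ℂ (u ⊗ₜ[ℂ] v) : H ⊗[ℂ] H →ₗ[ℂ] H ⊗[ℂ] H) =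
      TensorProduct.map (LinearMap.mulRight ℂ u) (LinearMap.mulRight ℂ v) := by
  apply TensorProduct.ext'
  intro a b
  simp [Algebra.TensorProduct.tmul_mul_tmul]

lemma mulLeft_tmul (u v : H) :
    (LinearMap.mulLeft ℂ (u ⊗ₜ[ℂ] v) : H ⊗[ℂ] H →ₗ[ℂ] H ⊗[ℂ] H) =
      TensorProduct.map (LinearMap.mulLeft ℂ u) (LinearMap.mulLeft ℂ v) := by
  apply TensorProduct.ext'
  intro a b
  simp [Algebra.TensorProduct.tmul_mul_tmul]

lemma DD_ruU (u : H) (hcomul : CoalgebraStruct.comul (R := ℂ) u = u ⊗ₜ[ℂ] u) :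
    DD H ∘ₗ ruU H u = TensorProduct.map (ruU H u) (ruU H u) ∘ₗ DD H := by
  rw [show TensorProduct.map (ruU H u) (ruU H u) =
      LinearMap.mulRight ℂ (u ⊗ₜ[ℂ] u) from (mulRight_tmul H u u).symm]
  ext a
  simp only [LinearMap.comp_apply, ruU, LinearMap.mulRight_apply, DD]
  rw [← hcomul]
  exact Bialgebra.comul_mul a u

lemma DD_luU (u : H) (hcomul : CoalgebraStruct.comul (R := ℂ) u = u ⊗ₜ[ℂ] u) :
    DD H ∘ₗ LinearMap.mulLeft ℂ u =
      TensorProduct.map (LinearMap.mulLeft ℂ u) (LinearMap.mulLeft ℂ u) ∘ₗ DD H := by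
  rw [show TensorProduct.map (LinearMap.mulLeft ℂ u) (LinearMap.mulLeft ℂ u) =
      LinearMap.mulLeft ℂ (u ⊗ₜ[ℂ] u) from (mulLeft_tmul H u u).symm]
  ext a
  simp only [LinearMap.comp_apply, LinearMap.mulLeft_apply, DD]
  rw [← hcomul]
  exact Bialgebra.comul_mul u a

lemma DD_sigU (u : H) (hcomul : CoalgebraStruct.comul (R := ℂ) u = u ⊗ₜ[ℂ] u) :
    DD H ∘ₗ sigU H u = TensorProduct.map (sigU H u) (sigU H u) ∘ₗ DD H := by
  have : sigU H u = (LinearMap.mulLeft ℂ u) ∘ₗ (LinearMap.mulRight ℂ u) := rfl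
  rw [this, ← LinearMap.comp_assoc, DD_luU H u hcomul, LinearMap.comp_assoc,
    show (LinearMap.mulRight ℂ u : H →ₗ[ℂ] H) = ruU H u from rfl, DD_ruU H u hcomul,
    ← LinearMap.comp_assoc, ← TensorProduct.map_comp]

lemma mapSubL (f g h : H →ₗ[ℂ] H) :
    TensorProduct.map (f - g) h = TensorProduct.map f h - TensorProduct.map g h := by
  apply TensorProduct.ext'
  intro a b
  simp [TensorProduct.sub_tmul]

lemma mapSubR (f g h : H →ₗ[ℂ] H) :
    TensorProduct.map h (f - g) = TensorProduct.map h f - TensorProduct.map h g := by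
  apply TensorProduct.ext'
  intro a b
  simp [TensorProduct.tmul_sub]

lemma map_pp_add_mm (u : H) :
    TensorProduct.map (pP H u) (pP H u) + TensorProduct.map (pM H u) (pM H u) =
      (2 : ℂ)⁻¹ • (TensorProduct.map LinearMap.id LinearMap.id
        + TensorProduct.map (sigU H u) (sigU H u)) := by
  simp only [pP, pM, TensorProduct.map_smul_left, TensorProduct.map_smul_right,
    TensorProduct.map_add_left, TensorProduct.map_add_right, mapSubL, mapSubR, smul_smul]
  module

lemma map_pm_add_mp (u : H) :
    TensorProduct.map (pP H u) (pM H u) + TensorProduct.map (pM H u) (pP H u) =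
      (2 : ℂ)⁻¹ • (TensorProduct.map LinearMap.id LinearMap.id
        - TensorProduct.map (sigU H u) (sigU H u)) := by
  simp only [pP, pM, TensorProduct.map_smul_left, TensorProduct.map_smul_right,
    TensorProduct.map_add_left, TensorProduct.map_add_right, mapSubL, mapSubR, smul_smul]
  module

lemma DD_pP (u : H) (hcomul : CoalgebraStruct.comul (R := ℂ) u = u ⊗ₜ[ℂ] u) :
    DD H ∘ₗ pP H u =
      (TensorProduct.map (pP H u) (pP H u) + TensorProduct.map (pM H u) (pM H u)) ∘ₗ DD H := by
  rw [map_pp_add_mm]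
  simp only [pP, LinearMap.comp_smul, LinearMap.smul_comp, LinearMap.comp_add,
    LinearMap.add_comp, LinearMap.comp_id, TensorProduct.map_id, LinearMap.id_comp,
    DD_sigU H u hcomul]

lemma DD_pM (u : H) (hcomul : CoalgebraStruct.comul (R := ℂ) u = u ⊗ₜ[ℂ] u) :
    DD H ∘ₗ pM H u =
      (TensorProduct.map (pP H u) (pM H u) + TensorProduct.map (pM H u) (pP H u)) ∘ₗ DD H := by
  rw [map_pm_add_mp]
  simp only [pM, LinearMap.comp_smul, LinearMap.smul_comp, LinearMap.comp_sub,
    LinearMap.sub_comp, LinearMap.comp_id, TensorProduct.map_id, LinearMap.id_comp,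
    DD_sigU H u hcomul]

/-- Coassociativity of the underlying comultiplication in `map` form. -/
lemma DD_coassoc :
    (TensorProduct.assoc ℂ H H H).toLinearMap ∘ₗ
        TensorProduct.map (DD H) LinearMap.id ∘ₗ DD H =
      TensorProduct.map LinearMap.id (DD H) ∘ₗ DD H := by
  have h := Coalgebra.coassoc (R := ℂ) (A := H)
  simpa [DD, LinearMap.rTensor, LinearMap.lTensor, LinearMap.comp_assoc] using h


variable {N : Type*} [AddCommMonoid N] [Module ℂ N]

lemma Phi_comp_map (u : H) (f g : H →ₗ[ℂ] H) :
    Phi H u ∘ₗ TensorProduct.map f g =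
      TensorProduct.map f (pP H u ∘ₗ g) + TensorProduct.map (ruU H u ∘ₗ f) (pM H u ∘ₗ g) := by
  rw [Phi, LinearMap.add_comp, ← TensorProduct.map_comp, ← TensorProduct.map_comp,
    LinearMap.id_comp]

lemma map_fst_comp_Phi (u : H) (f : H →ₗ[ℂ] N) :
    TensorProduct.map f (LinearMap.id : H →ₗ[ℂ] H) ∘ₗ Phi H u =
      TensorProduct.map f (pP H u) + TensorProduct.map (f ∘ₗ ruU H u) (pM H u) := by
  rw [Phi, LinearMap.comp_add, ← TensorProduct.map_comp, ← TensorProduct.map_comp]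
  simp only [LinearMap.id_comp, LinearMap.comp_id]

lemma map_snd_comp_Phi (u : H) (f : H →ₗ[ℂ] N) :
    TensorProduct.map (LinearMap.id : H →ₗ[ℂ] H) f ∘ₗ Phi H u =
      TensorProduct.map LinearMap.id (f ∘ₗ pP H u) +
        TensorProduct.map (ruU H u) (f ∘ₗ pM H u) := by
  rw [Phi, LinearMap.comp_add, ← TensorProduct.map_comp, ← TensorProduct.map_comp]
  simp only [LinearMap.id_comp, LinearMap.comp_id]

lemma map_DD_left (f : H ⊗[ℂ] H →ₗ[ℂ] N) (g : H →ₗ[ℂ] H) :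
    TensorProduct.map (f ∘ₗ DD H) g =
      TensorProduct.map f g ∘ₗ TensorProduct.map (DD H) LinearMap.id := by
  rw [← TensorProduct.map_comp, LinearMap.comp_id]

lemma map_DD_right (f : H ⊗[ℂ] H →ₗ[ℂ] N) (g : H →ₗ[ℂ] H) :
    TensorProduct.map g (f ∘ₗ DD H) =
      TensorProduct.map g f ∘ₗ TensorProduct.map LinearMap.id (DD H) := by
  rw [← TensorProduct.map_comp, LinearMap.comp_id]

/-- `Φ ∘ (map r r)` in normal form. -/
lemma Phi_comp_map_rr (u : H) (hu : u * u = 1) :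
    Phi H u ∘ₗ TensorProduct.map (ruU H u) (ruU H u) =
      TensorProduct.map (ruU H u) (ruU H u ∘ₗ pP H u) +
        TensorProduct.map LinearMap.id (ruU H u ∘ₗ pM H u) := by
  rw [Phi_comp_map, pP_ruU, pM_ruU, ruU_ruU H u hu]

/-- If `u² = 1`, `Δ(u) = u ⊗ u` and `ε(u) = 1`, the picture-changed comultiplication `Δ_u`
is coassociative. -/
theorem Deltau_coassoc (u : H) (hu : u * u = 1)
    (hcomul : CoalgebraStruct.comul (R := ℂ) u = u ⊗ₜ[ℂ] u)
    (hcounit : CoalgebraStruct.counit (R := ℂ) u = 1) :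
    (TensorProduct.assoc ℂ H H H).toLinearMap ∘ₗ
        TensorProduct.map (Deltau H u) LinearMap.id ∘ₗ Deltau H u =
      TensorProduct.map LinearMap.id (Deltau H u) ∘ₗ Deltau H u := by
  classical
  have hDu : Deltau H u = Phi H u ∘ₗ DD H := by
    rw [Deltau, Pmap_eq_Phi]; rfl
  -- the common "normal form"
  set T : H ⊗[ℂ] (H ⊗[ℂ] H) →ₗ[ℂ] H ⊗[ℂ] (H ⊗[ℂ] H) :=
    TensorProduct.map LinearMap.id (TensorProduct.map (pP H u) (pP H u))
    + TensorProduct.map (ruU H u) (TensorProduct.map (pM H u) (pP H u))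
    + (TensorProduct.map (ruU H u)
        (TensorProduct.map (ruU H u ∘ₗ pP H u) (pM H u))
    + TensorProduct.map LinearMap.id
        (TensorProduct.map (ruU H u ∘ₗ pM H u) (pM H u))) with hT
  have hL : (TensorProduct.assoc ℂ H H H).toLinearMap ∘ₗ
      TensorProduct.map (Deltau H u) LinearMap.id ∘ₗ Deltau H u =
      T ∘ₗ (TensorProduct.map LinearMap.id (DD H) ∘ₗ DD H) := by
    rw [hDu]
    -- `map (Φ∘D) id ∘ Φ ∘ D` : first rewrite `map (Φ∘D) id ∘ Φ`
    have e1 : TensorProduct.map (Phi H u ∘ₗ DD H) (LinearMap.id : H →ₗ[ℂ] H) ∘ₗ Phi H u =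
        (TensorProduct.map (Phi H u) (pP H u)
          + TensorProduct.map (Phi H u ∘ₗ TensorProduct.map (ruU H u) (ruU H u)) (pM H u))
          ∘ₗ TensorProduct.map (DD H) LinearMap.id := by
      rw [map_fst_comp_Phi, LinearMap.comp_assoc, DD_ruU H u hcomul,
        ← LinearMap.comp_assoc (DD H), LinearMap.add_comp]
      rw [map_DD_left H (Phi H u) (pP H u),
        map_DD_left H (Phi H u ∘ₗ TensorProduct.map (ruU H u) (ruU H u)) (pM H u)]
    -- expand Φ in the two leftover spots
    have e2 : TensorProduct.map (Phi H u) (pP H u)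
          + TensorProduct.map (Phi H u ∘ₗ TensorProduct.map (ruU H u) (ruU H u)) (pM H u) =
        TensorProduct.map (TensorProduct.map LinearMap.id (pP H u)) (pP H u)
          + TensorProduct.map (TensorProduct.map (ruU H u) (pM H u)) (pP H u)
          + (TensorProduct.map (TensorProduct.map (ruU H u) (ruU H u ∘ₗ pP H u)) (pM H u)
          + TensorProduct.map (TensorProduct.map LinearMap.id (ruU H u ∘ₗ pM H u)) (pM H u))
          := by
      rw [Phi_comp_map_rr H u hu, Phi, TensorProduct.map_add_left, TensorProduct.map_add_left]
    calc (TensorProduct.assoc ℂ H H H).toLinearMap ∘ₗ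
        TensorProduct.map (Phi H u ∘ₗ DD H) LinearMap.id ∘ₗ (Phi H u ∘ₗ DD H)
        = (TensorProduct.assoc ℂ H H H).toLinearMap ∘ₗ
            (TensorProduct.map (Phi H u ∘ₗ DD H) LinearMap.id ∘ₗ Phi H u) ∘ₗ DD H := by
          rw [LinearMap.comp_assoc]
      _ = ((TensorProduct.assoc ℂ H H H).toLinearMap ∘ₗ
            (TensorProduct.map (TensorProduct.map LinearMap.id (pP H u)) (pP H u)
          + TensorProduct.map (TensorProduct.map (ruU H u) (pM H u)) (pP H u)
          + (TensorProduct.map (TensorProduct.map (ruU H u) (ruU H u ∘ₗ pP H u)) (pM H u)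
          + TensorProduct.map (TensorProduct.map LinearMap.id (ruU H u ∘ₗ pM H u)) (pM H u))))
            ∘ₗ (TensorProduct.map (DD H) LinearMap.id ∘ₗ DD H) := by
          rw [e1, e2]
          simp only [LinearMap.comp_assoc]
      _ = (T ∘ₗ (TensorProduct.assoc ℂ H H H).toLinearMap)
            ∘ₗ (TensorProduct.map (DD H) LinearMap.id ∘ₗ DD H) := by
          congr 1
          rw [hT]
          simp only [LinearMap.comp_add, LinearMap.add_comp,
            TensorProduct.map_map_comp_assoc_eq]
      _ = T ∘ₗ ((TensorProduct.assoc ℂ H H H).toLinearMap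
            ∘ₗ TensorProduct.map (DD H) LinearMap.id ∘ₗ DD H) := by
          simp only [LinearMap.comp_assoc]
      _ = T ∘ₗ (TensorProduct.map LinearMap.id (DD H) ∘ₗ DD H) := by
          rw [DD_coassoc]
  have hR : TensorProduct.map LinearMap.id (Deltau H u) ∘ₗ Deltau H u =
      T ∘ₗ (TensorProduct.map LinearMap.id (DD H) ∘ₗ DD H) := by
    rw [hDu]
    have f1 : Phi H u ∘ₗ (DD H ∘ₗ pP H u) =
        (TensorProduct.map (pP H u) (pP H u)
          + TensorProduct.map (ruU H u ∘ₗ pM H u) (pM H u)) ∘ₗ DD H := by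
      rw [DD_pP H u hcomul, ← LinearMap.comp_assoc, LinearMap.comp_add, Phi_comp_map,
        Phi_comp_map, pP_pP H u hu, pM_pP H u hu, pP_pM H u hu, pM_pM H u hu,
        TensorProduct.map_zero_right, TensorProduct.map_zero_right]
      congr 1
      abel
    have f2 : Phi H u ∘ₗ (DD H ∘ₗ pM H u) =
        (TensorProduct.map (ruU H u ∘ₗ pP H u) (pM H u)
          + TensorProduct.map (pM H u) (pP H u)) ∘ₗ DD H := by
      rw [DD_pM H u hcomul, ← LinearMap.comp_assoc, LinearMap.comp_add, Phi_comp_map,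
        Phi_comp_map, pP_pP H u hu, pM_pP H u hu, pP_pM H u hu, pM_pM H u hu,
        TensorProduct.map_zero_right, TensorProduct.map_zero_right]
      congr 1
      abel
    have e1 : TensorProduct.map (LinearMap.id : H →ₗ[ℂ] H) (Phi H u ∘ₗ DD H) ∘ₗ Phi H u =
        TensorProduct.map LinearMap.id (Phi H u ∘ₗ (DD H ∘ₗ pP H u))
          + TensorProduct.map (ruU H u) (Phi H u ∘ₗ (DD H ∘ₗ pM H u)) := by
      rw [map_snd_comp_Phi, LinearMap.comp_assoc, LinearMap.comp_assoc]
    calc TensorProduct.map LinearMap.id (Phi H u ∘ₗ DD H) ∘ₗ (Phi H u ∘ₗ DD H)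
        = (TensorProduct.map LinearMap.id (Phi H u ∘ₗ DD H) ∘ₗ Phi H u) ∘ₗ DD H := by
          rw [LinearMap.comp_assoc]
      _ = (TensorProduct.map LinearMap.id
            ((TensorProduct.map (pP H u) (pP H u)
              + TensorProduct.map (ruU H u ∘ₗ pM H u) (pM H u)) ∘ₗ DD H)
          + TensorProduct.map (ruU H u)
            ((TensorProduct.map (ruU H u ∘ₗ pP H u) (pM H u)
              + TensorProduct.map (pM H u) (pP H u)) ∘ₗ DD H)) ∘ₗ DD H := by
          rw [e1, f1, f2]
      _ = T ∘ₗ (TensorProduct.map LinearMap.id (DD H) ∘ₗ DD H) := by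
          rw [map_DD_right, map_DD_right, hT]
          rw [← LinearMap.comp_assoc]
          congr 1
          rw [← LinearMap.add_comp]
          congr 1
          rw [TensorProduct.map_add_right, TensorProduct.map_add_right]
          abel
  rw [hL, hR]
end
end

section
/- Let H be a bialgebra over ℂ with comultiplication Δ and counit ε, and let u ∈ H satisfy u·u = 1, Δ(u) = u ⊗ u and ε(u) = 1. Define the linear map P : H ⊗ H → H ⊗ H by P(y) := (1/2)(y + (1⊗u)·y·(1⊗u)) + (1/2)(y − (1⊗u)·y·(1⊗u))·(u⊗1), and set Δ_u := P ∘ Δ : H → H ⊗ H. Then Δ_u satisfies the counit laws: (ε ⊗ id) ∘ Δ_u = id and (id ⊗ ε) ∘ Δ_u = id, under the canonical identifications ℂ ⊗ H ≅ H ≅ H ⊗ ℂ. -/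
open scoped TensorProduct

noncomputable section

variable (H : Type*) [Ring H] [Bialgebra ℂ H]

lemma counit_mul' (a b : H) : CoalgebraStruct.counit (R := ℂ) (a * b)
    = CoalgebraStruct.counit (R := ℂ) a * CoalgebraStruct.counit (R := ℂ) b := by
  simpa using map_mul (Bialgebra.counitAlgHom ℂ H) a b

lemma Pmap_tmul (u a b : H) : Pmap H u (a ⊗ₜ[ℂ] b) =
    (2:ℂ)⁻¹ • (a ⊗ₜ[ℂ] b + a ⊗ₜ[ℂ] (u * b * u)) +
    (2:ℂ)⁻¹ • ((a * u) ⊗ₜ[ℂ] b - (a * u) ⊗ₜ[ℂ] (u * b * u)) := by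
  simp [Pmap, conjT, LinearMap.mulRight_apply, LinearMap.mulLeft_apply,
    Algebra.TensorProduct.tmul_mul_tmul, mul_assoc, sub_mul, TensorProduct.sub_tmul]

lemma key1 (u : H) (hcounit : CoalgebraStruct.counit (R := ℂ) u = 1) (y : H ⊗[ℂ] H) :
    (TensorProduct.lid ℂ H) (TensorProduct.map (CoalgebraStruct.counit (R := ℂ) (A := H)) LinearMap.id (Pmap H u y)) =
    (TensorProduct.lid ℂ H) (TensorProduct.map (CoalgebraStruct.counit (R := ℂ) (A := H)) LinearMap.id y) := by
  induction y using TensorProduct.induction_on with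
  | zero => simp
  | tmul a b =>
      simp only [Pmap_tmul, map_add, map_smul, map_sub, TensorProduct.map_tmul,
        LinearMap.id_coe, id_eq, TensorProduct.lid_tmul, counit_mul', hcounit, mul_one]
      module
  | add x y hx hy => simp [map_add, hx, hy]

lemma key2 (u : H) (hcounit : CoalgebraStruct.counit (R := ℂ) u = 1) (y : H ⊗[ℂ] H) :
    (TensorProduct.rid ℂ H) (TensorProduct.map LinearMap.id (CoalgebraStruct.counit (R := ℂ) (A := H)) (Pmap H u y)) =
    (TensorProduct.rid ℂ H) (TensorProduct.map LinearMap.id (CoalgebraStruct.counit (R := ℂ) (A := H)) y) := by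
  induction y using TensorProduct.induction_on with
  | zero => simp
  | tmul a b =>
      simp only [Pmap_tmul, map_add, map_smul, map_sub, TensorProduct.map_tmul,
        LinearMap.id_coe, id_eq, TensorProduct.rid_tmul, counit_mul', hcounit, mul_one, one_mul]
      module
  | add x y hx hy => simp [map_add, hx, hy]

/-- If `u² = 1`, `Δ(u) = u ⊗ u` and `ε(u) = 1`, the picture-changed comultiplication `Δ_u`
satisfies the counit laws `(ε ⊗ id) ∘ Δ_u = id` and `(id ⊗ ε) ∘ Δ_u = id`. -/
theorem Deltau_counit (u : H) (hu : u * u = 1)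
    (hcomul : CoalgebraStruct.comul (R := ℂ) u = u ⊗ₜ[ℂ] u)
    (hcounit : CoalgebraStruct.counit (R := ℂ) u = 1) :
    (TensorProduct.lid ℂ H).toLinearMap ∘ₗ
        TensorProduct.map (CoalgebraStruct.counit (R := ℂ) (A := H)) LinearMap.id ∘ₗ
          Deltau H u = LinearMap.id ∧
      (TensorProduct.rid ℂ H).toLinearMap ∘ₗ
          TensorProduct.map LinearMap.id (CoalgebraStruct.counit (R := ℂ) (A := H)) ∘ₗ
            Deltau H u = LinearMap.id := by
  constructor <;> ext x <;>
    simp only [LinearMap.comp_apply, Deltau, LinearMap.id_apply, LinearEquiv.coe_coe]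
  · rw [key1 H u hcounit]
    have := Coalgebra.rTensor_counit_comul (R := ℂ) x
    rw [show TensorProduct.map (CoalgebraStruct.counit (R := ℂ) (A := H)) LinearMap.id
        = LinearMap.rTensor H (CoalgebraStruct.counit (R := ℂ) (A := H)) from rfl, this]
    simp
  · rw [key2 H u hcounit]
    have := Coalgebra.lTensor_counit_comul (R := ℂ) x
    rw [show TensorProduct.map LinearMap.id (CoalgebraStruct.counit (R := ℂ) (A := H))
        = LinearMap.lTensor H (CoalgebraStruct.counit (R := ℂ) (A := H)) from rfl, this]
    simp
end
end
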